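/- arXiv:2507.19192 — 5 statements merged into one kernel-verified Lean document; each statement's English description precedes it below -/
import Mathlib

section
/- Let k₁, k₂, k₃ ∈ ℕ and define w : ℝ³ → ℝ by w(x) = cos(2πk₁x₁/l₁)·cos(2πk₂x₂/l₂)·cos(πk₃(x₃+l₃⁻)/l₃), and the vector fields E := (0, ∂₃w, −∂₂w) and H := (iωμ)⁻¹·(−∂₂²w − ∂₃²w, ∂₁∂₂w, ∂₁∂₃w). If ω² = (4π²/(εμ))·(k₁²/l₁² + k₂²/l₂² + k₃²/(4l₃²)), then curl H(x) = −iωε·E(x) for every x ∈ ℝ³. -/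
/-!
Write `w = f(x₁) g(x₂) h(x₃)` with `f'' = -a² f`, `g'' = -b² g`, `h'' = -c² h`. Every partial
derivative of such a product is again a product of factors and their derivatives, so `curl H`
can be computed factor by factor: the mixed terms cancel and `f'' = -a² f` turns the remaining
ones into `(a² + b² + c²)/(iωμ) · E`. The resonance condition says exactly that
`a² + b² + c² = εμω²` for the wave numbers `a = 2πk₁/l₁`, `b = 2πk₂/l₂`, `c = πk₃/l₃`,
and `εμω²/(iωμ) = -iωε`.
-/

open Real Complex Filter Topology

/-- Partial derivative in the first coordinate. -/
noncomputable def pd1 {F : Type*} [NormedAddCommGroup F] [NormedSpace ℝ F]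
    (f : ℝ × ℝ × ℝ → F) (x : ℝ × ℝ × ℝ) : F :=
  deriv (fun t => f (t, x.2.1, x.2.2)) x.1

/-- Partial derivative in the second coordinate. -/
noncomputable def pd2 {F : Type*} [NormedAddCommGroup F] [NormedSpace ℝ F]
    (f : ℝ × ℝ × ℝ → F) (x : ℝ × ℝ × ℝ) : F :=
  deriv (fun t => f (x.1, t, x.2.2)) x.2.1

/-- Partial derivative in the third coordinate. -/
noncomputable def pd3 {F : Type*} [NormedAddCommGroup F] [NormedSpace ℝ F]
    (f : ℝ × ℝ × ℝ → F) (x : ℝ × ℝ × ℝ) : F :=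
  deriv (fun t => f (x.1, x.2.1, t)) x.2.2

/-- Curl of a complex vector field on ℝ³. -/
noncomputable def curl3 (F : ℝ × ℝ × ℝ → ℂ × ℂ × ℂ) (x : ℝ × ℝ × ℝ) : ℂ × ℂ × ℂ :=
  (pd2 (fun y => (F y).2.2) x - pd3 (fun y => (F y).2.1) x,
   pd3 (fun y => (F y).1) x - pd1 (fun y => (F y).2.2) x,
   pd1 (fun y => (F y).2.1) x - pd2 (fun y => (F y).1) x)

/-- Divergence of a complex vector field on ℝ³. -/
noncomputable def div3 (F : ℝ × ℝ × ℝ → ℂ × ℂ × ℂ) (x : ℝ × ℝ × ℝ) : ℂ :=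
  pd1 (fun y => (F y).1) x + pd2 (fun y => (F y).2.1) x + pd3 (fun y => (F y).2.2) x

/-- Laplacian of a scalar function on ℝ³. -/
noncomputable def lap {F : Type*} [NormedAddCommGroup F] [NormedSpace ℝ F]
    (f : ℝ × ℝ × ℝ → F) (x : ℝ × ℝ × ℝ) : F :=
  pd1 (pd1 f) x + pd2 (pd2 f) x + pd3 (pd3 f) x

/-- Gradient of a complex scalar function on ℝ³. -/
noncomputable def grad3 (f : ℝ × ℝ × ℝ → ℂ) (x : ℝ × ℝ × ℝ) : ℂ × ℂ × ℂ :=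
  (pd1 f x, pd2 f x, pd3 f x)

noncomputable def sepProd (f g h : ℝ → ℝ) (x : ℝ × ℝ × ℝ) : ℂ :=
  ((f x.1 * g x.2.1 * h x.2.2 : ℝ) : ℂ)

section sepProd

variable {f g h : ℝ → ℝ}

lemma sepProd_const_mul_fst (C : ℝ) :
    sepProd (fun t => C * f t) g h = fun x => C * sepProd f g h x := by
  funext x; simp only [sepProd]; push_cast; ring

lemma sepProd_const_mul_snd (C : ℝ) :
    sepProd f (fun t => C * g t) h = fun x => C * sepProd f g h x := by
  funext x; simp only [sepProd]; push_cast; ring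

lemma sepProd_const_mul_thd (C : ℝ) :
    sepProd f g (fun t => C * h t) = fun x => C * sepProd f g h x := by
  funext x; simp only [sepProd]; push_cast; ring

lemma pd1_sepProd {f' : ℝ → ℝ} (hf : ∀ t, HasDerivAt f (f' t) t) :
    pd1 (sepProd f g h) = sepProd f' g h := by
  funext x
  exact ((((hf x.1).mul_const (g x.2.1)).mul_const (h x.2.2)).ofReal_comp).deriv

lemma pd2_sepProd {g' : ℝ → ℝ} (hg : ∀ t, HasDerivAt g (g' t) t) :
    pd2 (sepProd f g h) = sepProd f g' h := by
  funext x
  exact ((((hg x.2.1).const_mul (f x.1)).mul_const (h x.2.2)).ofReal_comp).deriv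

lemma pd3_sepProd {h' : ℝ → ℝ} (hh : ∀ t, HasDerivAt h (h' t) t) :
    pd3 (sepProd f g h) = sepProd f g h' := by
  funext x
  exact (((hh x.2.2).const_mul (f x.1 * g x.2.1)).ofReal_comp).deriv

end sepProd

section constMul

variable (C : ℂ) (F : ℝ × ℝ × ℝ → ℂ)

lemma pd1_const_mul : pd1 (fun x => C * F x) = fun x => C * pd1 F x := by
  funext x; exact congrFun (deriv_const_mul_field' C) x.1

lemma pd2_const_mul : pd2 (fun x => C * F x) = fun x => C * pd2 F x := by
  funext x; exact congrFun (deriv_const_mul_field' C) x.2.1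

lemma pd3_const_mul : pd3 (fun x => C * F x) = fun x => C * pd3 F x := by
  funext x; exact congrFun (deriv_const_mul_field' C) x.2.2

end constMul

lemma hasDerivAt_mul_add (a φ t : ℝ) : HasDerivAt (fun s => a * s + φ) a t := by
  simpa using ((hasDerivAt_id t).const_mul a).add_const φ

lemma hasDerivAt_cos_mul_add (a φ t : ℝ) :
    HasDerivAt (fun s => Real.cos (a * s + φ)) (-(a * Real.sin (a * t + φ))) t :=
  (hasDerivAt_mul_add a φ t).cos.congr_deriv (by ring)

lemma hasDerivAt_neg_mul_sin_mul_add (a φ t : ℝ) :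
    HasDerivAt (fun s => -(a * Real.sin (a * s + φ))) (-a ^ 2 * Real.cos (a * t + φ)) t :=
  ((hasDerivAt_mul_add a φ t).sin.const_mul a).neg.congr_deriv (by ring)

theorem curl3_of_sepProd {a b c : ℝ} {f f' g g' h h' : ℝ → ℝ}
    (hf : ∀ t, HasDerivAt f (f' t) t) (hf' : ∀ t, HasDerivAt f' (-a ^ 2 * f t) t)
    (hg : ∀ t, HasDerivAt g (g' t) t) (hg' : ∀ t, HasDerivAt g' (-b ^ 2 * g t) t)
    (hh : ∀ t, HasDerivAt h (h' t) t) (hh' : ∀ t, HasDerivAt h' (-c ^ 2 * h t) t)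
    (K : ℂ) (x : ℝ × ℝ × ℝ) :
    curl3 (fun y => K • ((-(pd2 (pd2 (sepProd f g h)) y) - pd3 (pd3 (sepProd f g h)) y,
        pd1 (pd2 (sepProd f g h)) y, pd1 (pd3 (sepProd f g h)) y) : ℂ × ℂ × ℂ)) x =
      (K * (a ^ 2 + b ^ 2 + c ^ 2)) •
        ((0, pd3 (sepProd f g h) x, -(pd2 (sepProd f g h) x)) : ℂ × ℂ × ℂ) := by
  have hH : (fun y => K • ((-(pd2 (pd2 (sepProd f g h)) y) - pd3 (pd3 (sepProd f g h)) y,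
        pd1 (pd2 (sepProd f g h)) y, pd1 (pd3 (sepProd f g h)) y) : ℂ × ℂ × ℂ)) =
      fun y => (K * (b ^ 2 + c ^ 2) * sepProd f g h y, K * sepProd f' g' h y,
        K * sepProd f' g h' y) := by
    rw [pd2_sepProd hg, pd2_sepProd hg', pd3_sepProd hh, pd3_sepProd hh', pd1_sepProd hf,
      pd1_sepProd hf, sepProd_const_mul_snd, sepProd_const_mul_thd]
    funext y
    simp only [Prod.smul_mk, smul_eq_mul, Prod.mk.injEq]
    exact ⟨by push_cast; ring, trivial⟩
  rw [hH, curl3]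
  simp only [pd1_const_mul, pd2_const_mul, pd3_const_mul, pd1_sepProd hf',
    pd2_sepProd hg, pd3_sepProd hh, sepProd_const_mul_fst]
  simp only [Prod.smul_mk, smul_eq_mul, Prod.mk.injEq]
  push_cast
  exact ⟨by ring, by ring, by ring⟩

theorem stmt1_general (l₁ l₂ l₃p l₃m ε μ ω : ℝ)
    (hε : 0 < ε) (hμ : 0 < μ) (hω : 0 < ω)
    (k₁ k₂ k₃ : ℕ)
    (hω2 : ω ^ 2 = 4 * π ^ 2 / (ε * μ) * ((k₁ : ℝ) ^ 2 / l₁ ^ 2 + (k₂ : ℝ) ^ 2 / l₂ ^ 2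
        + (k₃ : ℝ) ^ 2 / (4 * (l₃p + l₃m) ^ 2)))
    (w : ℝ × ℝ × ℝ → ℂ)
    (hw : w = fun x => ((Real.cos (2 * π * (k₁ : ℝ) * x.1 / l₁) *
        Real.cos (2 * π * (k₂ : ℝ) * x.2.1 / l₂) *
        Real.cos (π * (k₃ : ℝ) * (x.2.2 + l₃m) / (l₃p + l₃m)) : ℝ) : ℂ))
    (E H : ℝ × ℝ × ℝ → ℂ × ℂ × ℂ)
    (hE : E = fun x => (0, pd3 w x, -(pd2 w x)))
    (hH : H = fun x => (Complex.I * (ω : ℂ) * (μ : ℂ))⁻¹ •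
        ((-(pd2 (pd2 w) x) - pd3 (pd3 w) x, pd1 (pd2 w) x, pd1 (pd3 w) x) : ℂ × ℂ × ℂ)) :
    ∀ x : ℝ × ℝ × ℝ, curl3 H x = (-(Complex.I * (ω : ℂ) * (ε : ℂ))) • E x := by
  intro x
  set a := 2 * π * k₁ / l₁
  set b := 2 * π * k₂ / l₂
  set c := π * k₃ / (l₃p + l₃m)
  have hw' : w = sepProd (fun s => Real.cos (a * s + 0)) (fun s => Real.cos (b * s + 0))
      (fun s => Real.cos (c * s + c * l₃m)) := by
    subst hw; funext y; simp only [sepProd]; congr 4 <;> ring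
  have hres : a ^ 2 + b ^ 2 + c ^ 2 = ε * μ * ω ^ 2 := by
    rw [hω2]; simp only [a, b, c]; field_simp; ring
  have hcoeff : (Complex.I * ω * μ)⁻¹ * (a ^ 2 + b ^ 2 + c ^ 2 : ℝ) = -(Complex.I * ω * ε) := by
    have hμ' : (μ : ℂ) ≠ 0 := by exact_mod_cast hμ.ne'
    have hω' : (ω : ℂ) ≠ 0 := by exact_mod_cast hω.ne'
    rw [hres]; push_cast
    field_simp
    linear_combination (ε : ℂ) * Complex.I_sq
  subst hE hH
  rw [hw', curl3_of_sepProd (hasDerivAt_cos_mul_add a 0) (hasDerivAt_neg_mul_sin_mul_add a 0)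
    (hasDerivAt_cos_mul_add b 0) (hasDerivAt_neg_mul_sin_mul_add b 0)
    (hasDerivAt_cos_mul_add c _) (hasDerivAt_neg_mul_sin_mul_add c _), ← hcoeff]
  push_cast; rfl

/-- `curl H = -iωε E` under the resonance condition on ω. -/
theorem stmt1 (l₁ l₂ l₃p l₃m ε μ ω : ℝ)
    (hl₁ : 0 < l₁) (hl₂ : 0 < l₂) (hl₃p : 0 < l₃p) (hl₃m : 0 < l₃m)
    (hε : 0 < ε) (hμ : 0 < μ) (hω : 0 < ω)
    (k₁ k₂ k₃ : ℕ)
    (hω2 : ω ^ 2 = 4 * π ^ 2 / (ε * μ) * ((k₁ : ℝ) ^ 2 / l₁ ^ 2 + (k₂ : ℝ) ^ 2 / l₂ ^ 2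
        + (k₃ : ℝ) ^ 2 / (4 * (l₃p + l₃m) ^ 2)))
    (w : ℝ × ℝ × ℝ → ℂ)
    (hw : w = fun x => ((Real.cos (2 * π * (k₁ : ℝ) * x.1 / l₁) *
        Real.cos (2 * π * (k₂ : ℝ) * x.2.1 / l₂) *
        Real.cos (π * (k₃ : ℝ) * (x.2.2 + l₃m) / (l₃p + l₃m)) : ℝ) : ℂ))
    (E H : ℝ × ℝ × ℝ → ℂ × ℂ × ℂ)
    (hE : E = fun x => (0, pd3 w x, -(pd2 w x)))
    (hH : H = fun x => (Complex.I * (ω : ℂ) * (μ : ℂ))⁻¹ •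
        ((-(pd2 (pd2 w) x) - pd3 (pd3 w) x, pd1 (pd2 w) x, pd1 (pd3 w) x) : ℂ × ℂ × ℂ)) :
    ∀ x : ℝ × ℝ × ℝ, curl3 H x = (-(Complex.I * (ω : ℂ) * (ε : ℂ))) • E x :=
  stmt1_general l₁ l₂ l₃p l₃m ε μ ω hε hμ hω k₁ k₂ k₃ hω2 w hw E H hE hH
end

section
/- Let l > 0 and λ > 0 with λ ∉ { (2πk/l)² : k ∈ ℕ }. Then for every continuous l-periodic function f : ℝ → ℂ there exists a unique twice continuously differentiable l-periodic function φ : ℝ → ℂ satisfying −φ''(x) − λ·φ(x) = f(x) for all x ∈ ℝ. -/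
/-!
Choose `c` with `c ^ 2 = -λ`, so that `-∂² - λ = -(∂ - c)(∂ + c)`. A periodic first-order problem
`u' = c u + g` is uniquely solvable as soon as `exp (c l) ≠ 1`: the defect `u (x + l) - u x` of any
solution is a multiple of `exp (c x)`, so variation of constants with the right initial value gives
a periodic solution, and the difference of two periodic solutions vanishes. Since `exp (±c l) = 1`
forces `λ = (2πk/l)²`, we may solve `u' = c u - f` and then `φ' = -c φ + u`; conversely, for any
periodic solution `ψ`, `ψ' + c ψ` solves the first problem, hence equals `u`, and so `ψ = φ`.
-/

open Real Complex Function

section PeriodicLinearODE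

variable {c : ℂ} {l : ℝ} {g u : ℝ → ℂ}

theorem hasDerivAt_cexp_mul_ofReal (c : ℂ) (x : ℝ) :
    HasDerivAt (fun y : ℝ => cexp (c * y)) (c * cexp (c * x)) x := by
  simpa [mul_comm] using ((hasDerivAt_id x).ofReal_comp.const_mul c).cexp

theorem eq_mul_cexp_of_hasDerivAt {w : ℝ → ℂ} (hw : ∀ x, HasDerivAt w (c * w x) x) (x : ℝ) :
    w x = w 0 * cexp (c * x) := by
  have hconst : ∀ y, HasDerivAt (fun y : ℝ => w y * cexp (-c * y)) 0 y := fun y =>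
    ((hw y).mul (hasDerivAt_cexp_mul_ofReal (-c) y)).congr_deriv (by ring)
  have := is_const_of_deriv_eq_zero (fun y => (hconst y).differentiableAt)
    (fun y => (hconst y).deriv) x 0
  simp only [Complex.ofReal_zero, mul_zero, Complex.exp_zero, mul_one] at this
  rw [← this, mul_assoc, ← Complex.exp_add]
  simp

theorem sub_eq_mul_cexp_of_hasDerivAt (hg : Periodic g l)
    (hu : ∀ x, HasDerivAt u (c * u x + g x) x) (x : ℝ) :
    u (x + l) - u x = (u l - u 0) * cexp (c * x) := by
  have hw : ∀ y, HasDerivAt (fun y => u (y + l) - u y) (c * (u (y + l) - u y)) y := fun y =>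
    ((hu (y + l)).comp_add_const y l |>.sub (hu y)).congr_deriv (by rw [hg y]; ring)
  simpa using eq_mul_cexp_of_hasDerivAt hw x

theorem hasDerivAt_cexp_mul_integral (hg : Continuous g) (A : ℂ) (x : ℝ) :
    HasDerivAt (fun y : ℝ => cexp (c * y) * (A + ∫ t in (0 : ℝ)..y, cexp (-c * t) * g t))
      (c * (cexp (c * x) * (A + ∫ t in (0 : ℝ)..x, cexp (-c * t) * g t)) + g x) x := by
  have hint : Continuous fun t : ℝ => cexp (-c * t) * g t := by fun_prop
  refine ((hasDerivAt_cexp_mul_ofReal c x).mul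
    ((hint.integral_hasStrictDerivAt 0 x).hasDerivAt.const_add A)).congr_deriv ?_
  rw [mul_left_comm, ← mul_assoc, ← Complex.exp_add]
  simp only [neg_mul, neg_add_cancel, Complex.exp_zero, one_mul, add_left_inj]
  ring

theorem exists_periodic_hasDerivAt_mul_add (hE : cexp (c * l) ≠ 1) (hg : Continuous g)
    (hgp : Periodic g l) : ∃ u : ℝ → ℂ, Periodic u l ∧ ∀ x, HasDerivAt u (c * u x + g x) x := by
  -- the constant is chosen so that `u l = u 0`
  set A := cexp (c * l) * (∫ t in (0 : ℝ)..l, cexp (-c * t) * g t) / (1 - cexp (c * l))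
  refine ⟨_, fun x => ?_, hasDerivAt_cexp_mul_integral hg A⟩
  rw [← sub_eq_zero, sub_eq_mul_cexp_of_hasDerivAt hgp (hasDerivAt_cexp_mul_integral hg A)]
  have h1 : 1 - cexp (c * l) ≠ 0 := sub_ne_zero.2 hE.symm
  simp only [Complex.ofReal_zero, mul_zero, Complex.exp_zero, intervalIntegral.integral_same,
    add_zero, one_mul, A]
  generalize (∫ t in (0 : ℝ)..l, cexp (-c * t) * g t) = I
  field_simp
  ring

theorem eq_of_periodic_hasDerivAt_mul_add (hE : cexp (c * l) ≠ 1) {u₁ u₂ : ℝ → ℂ}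
    (hp₁ : Periodic u₁ l) (hu₁ : ∀ x, HasDerivAt u₁ (c * u₁ x + g x) x)
    (hp₂ : Periodic u₂ l) (hu₂ : ∀ x, HasDerivAt u₂ (c * u₂ x + g x) x) : u₁ = u₂ := by
  have hw : ∀ x, HasDerivAt (u₁ - u₂) (c * (u₁ - u₂) x) x := fun x =>
    ((hu₁ x).sub (hu₂ x)).congr_deriv (by simp only [Pi.sub_apply]; ring)
  have h0 : (u₁ - u₂) 0 = 0 := by
    have hl := eq_mul_cexp_of_hasDerivAt hw l
    rw [(hp₁.sub hp₂).eq] at hl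
    have : (u₁ - u₂) 0 * (cexp (c * l) - 1) = 0 := by linear_combination -hl
    simpa [sub_eq_zero, hE] using this
  funext x
  simpa [h0, sub_eq_zero] using eq_mul_cexp_of_hasDerivAt hw x

theorem existsUnique_periodic_hasDerivAt_mul_add (hE : cexp (c * l) ≠ 1) (hg : Continuous g)
    (hgp : Periodic g l) :
    ∃! u : ℝ → ℂ, Periodic u l ∧ ∀ x, HasDerivAt u (c * u x + g x) x := by
  obtain ⟨u, hu⟩ := exists_periodic_hasDerivAt_mul_add hE hg hgp
  exact ⟨u, hu, fun v hv => eq_of_periodic_hasDerivAt_mul_add hE hv.1 hv.2 hu.1 hu.2⟩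

theorem contDiff_of_hasDerivAt_mul_add (n : ℕ) (hg : ContDiff ℝ n g)
    (hu : ∀ x, HasDerivAt u (c * u x + g x) x) : ContDiff ℝ (n + 1) u := by
  have hdiff : Differentiable ℝ u := fun x => (hu x).differentiableAt
  have hderiv : deriv u = fun x => c * u x + g x := funext fun x => (hu x).deriv
  induction n with
  | zero =>
    refine contDiff_one_iff_deriv.2 ⟨hdiff, ?_⟩
    rw [hderiv]
    exact (continuous_const.mul hdiff.continuous).add (contDiff_zero.1 hg)
  | succ n ih =>
    refine contDiff_succ_iff_deriv.2 ⟨hdiff, by simp, ?_⟩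
    rw [hderiv]
    exact contDiff_const.mul (ih (hg.of_le (by norm_cast; omega))) |>.add hg

end PeriodicLinearODE

theorem Function.Periodic.deriv {𝕜 F : Type*} [NontriviallyNormedField 𝕜] [NormedAddCommGroup F]
    [NormedSpace 𝕜 F] {f : 𝕜 → F} {l : 𝕜} (hf : Periodic f l) : Periodic (deriv f) l :=
  fun x => by rw [← deriv_comp_add_const, hf.funext]

section Helmholtz

variable {lam : ℝ} {c : ℂ} {f : ℝ → ℂ}

theorem cexp_mul_ne_one_of_sq_eq_neg {l : ℝ} (hl : l ≠ 0)
    (hlam : ∀ k : ℕ, lam ≠ (2 * π * k / l) ^ 2) (hc : c ^ 2 = -lam) :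
    cexp (c * l) ≠ 1 := by
  intro h
  obtain ⟨n, hn⟩ := Complex.exp_eq_one_iff.1 h
  have hlC : (l : ℂ) ≠ 0 := by exact_mod_cast hl
  have hlamC : (lam : ℂ) = ((2 * π * n / l) ^ 2 : ℝ) := by
    rw [← neg_neg (lam : ℂ), ← hc, eq_div_of_mul_eq hlC hn]
    simp only [div_pow, mul_pow, Complex.I_sq]
    push_cast
    ring
  refine hlam n.natAbs ?_
  rw [Complex.ofReal_injective hlamC, Nat.cast_natAbs, Int.cast_abs]
  simp only [div_pow, mul_pow, sq_abs]

theorem helmholtz_of_hasDerivAt {u φ : ℝ → ℂ} (hc : c ^ 2 = -lam) (hf : Continuous f)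
    (hu : ∀ x, HasDerivAt u (c * u x + -f x) x) (hφ : ∀ x, HasDerivAt φ (-c * φ x + u x) x) :
    ContDiff ℝ 2 φ ∧ ∀ x, -deriv (deriv φ) x - lam * φ x = f x := by
  have hu₁ : ContDiff ℝ (0 + 1) u := contDiff_of_hasDerivAt_mul_add 0 (contDiff_zero.2 hf.neg) hu
  refine ⟨contDiff_of_hasDerivAt_mul_add 1 hu₁ hφ, fun x => ?_⟩
  have hφ' : deriv φ = fun x => -c * φ x + u x := funext fun x => (hφ x).deriv
  have hφ'' : HasDerivAt (fun x => -c * φ x + u x) _ x := ((hφ x).const_mul (-c)).add (hu x)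
  rw [hφ', hφ''.deriv]
  linear_combination -φ x * hc

theorem hasDerivAt_deriv_add_mul_of_helmholtz {ψ : ℝ → ℂ} (hc : c ^ 2 = -lam)
    (hψ : ContDiff ℝ 2 ψ) (hode : ∀ x, -deriv (deriv ψ) x - lam * ψ x = f x) (x : ℝ) :
    HasDerivAt (fun y => deriv ψ y + c * ψ y) (c * (deriv ψ x + c * ψ x) + -f x) x := by
  have hψ' := (hψ.differentiable two_ne_zero x).hasDerivAt
  have hψ'' := (hψ.differentiable_deriv_two x).hasDerivAt
  refine (hψ''.add (hψ'.const_mul c)).congr_deriv ?_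
  linear_combination -hode x - ψ x * hc

end Helmholtz

theorem stmt14_general (l lam : ℝ) (hl : 0 < l)
    (hspec : lam ∉ {x : ℝ | ∃ k : ℕ, x = (2 * π * (k : ℝ) / l) ^ 2}) :
    ∀ f : ℝ → ℂ, Continuous f → Function.Periodic f l →
      ∃! φ : ℝ → ℂ, ContDiff ℝ 2 φ ∧ Function.Periodic φ l ∧
        ∀ x : ℝ, -(deriv (deriv φ) x) - (lam : ℂ) * φ x = f x := by
  intro f hf hfp
  obtain ⟨c, hc⟩ := IsAlgClosed.exists_pow_nat_eq (-(lam : ℂ)) two_pos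
  have hlam : ∀ k : ℕ, lam ≠ (2 * π * k / l) ^ 2 := fun k hk => hspec ⟨k, hk⟩
  have hE : cexp (c * l) ≠ 1 := cexp_mul_ne_one_of_sq_eq_neg hl.ne' hlam hc
  have hE' : cexp (-c * l) ≠ 1 := cexp_mul_ne_one_of_sq_eq_neg hl.ne' hlam (by rw [neg_sq, hc])
  obtain ⟨u, ⟨hup, hu⟩, hu_unique⟩ :=
    existsUnique_periodic_hasDerivAt_mul_add hE hf.neg fun x => by simp [hfp x]
  obtain ⟨φ, ⟨hφp, hφ⟩, hφ_unique⟩ :=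
    existsUnique_periodic_hasDerivAt_mul_add hE'
      (Differentiable.continuous fun x => (hu x).differentiableAt) hup
  obtain ⟨hφ₂, hφ_ode⟩ := helmholtz_of_hasDerivAt hc hf hu hφ
  refine ⟨φ, ⟨hφ₂, hφp, hφ_ode⟩, fun ψ ⟨hψ₂, hψp, hψ_ode⟩ => hφ_unique ψ ⟨hψp, fun x => ?_⟩⟩
  have hfactor : (fun y => deriv ψ y + c * ψ y) = u :=
    hu_unique _ ⟨fun y => by simp [hψp y, hψp.deriv y],
      hasDerivAt_deriv_add_mul_of_helmholtz hc hψ₂ hψ_ode⟩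
  refine ((hψ₂.differentiable two_ne_zero x).hasDerivAt).congr_deriv ?_
  rw [← hfactor]
  ring

/-- unique solvability of the one-dimensional periodic Helmholtz problem
`-φ'' - λ φ = f` for non-resonant `λ`. -/
theorem stmt14 (l lam : ℝ) (hl : 0 < l) (hlam : 0 < lam)
    (hspec : lam ∉ {x : ℝ | ∃ k : ℕ, x = (2 * π * (k : ℝ) / l) ^ 2}) :
    ∀ f : ℝ → ℂ, Continuous f → Function.Periodic f l →
      ∃! φ : ℝ → ℂ, ContDiff ℝ 2 φ ∧ Function.Periodic φ l ∧
        ∀ x : ℝ, -(deriv (deriv φ) x) - (lam : ℂ) * φ x = f x :=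
  stmt14_general l lam hl hspec
end

section
/- Let ω > 0 and suppose ω² = (4π²/(εμ))·(k₁²/l₁² + k₂²/l₂² + k₃²/(4l₃²)) for some k₁, k₂, k₃ ∈ ℕ with (k₂,k₃) ≠ (0,0). Then there exist smooth vector fields E, H : ℝ³ → ℂ³ such that: (a) curl E = iωμ·H and curl H = −iωε·E at every point of ℝ³; (b) E₁ vanishes identically (in particular E₁ = 0 on Γ and on ∂horΩ) and E₂(x) = 0 whenever x₃ = −l₃⁻ or x₃ = l₃⁺; (c) E and H are l₁-periodic in x₁ and l₂-periodic in x₂; and (d) E is not identically zero on Ω. -/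
open Real Complex Filter Topology

noncomputable def cex (a t : ℝ) : ℂ := Complex.exp (Complex.I * a * t)
noncomputable def csn (g m t : ℝ) : ℂ := Complex.sin (g * t + g * m)
noncomputable def ccs (g m t : ℝ) : ℂ := Complex.cos (g * t + g * m)

lemma cex_ne_zero (a t : ℝ) : cex a t ≠ 0 := Complex.exp_ne_zero _

lemma hd_cex (a : ℝ) (t : ℝ) :
    HasDerivAt (fun s : ℝ => cex a s) (Complex.I * a * cex a t) t := by
  have h0 : HasDerivAt (fun s : ℝ => Complex.I * (a : ℂ) * (s : ℂ)) (Complex.I * a) t := by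
    simpa using (Complex.ofRealCLM.hasDerivAt (x := t)).const_mul (Complex.I * (a : ℂ))
  simpa [cex, mul_comm] using h0.cexp

lemma hd_aff (g m : ℝ) (t : ℂ) :
    HasDerivAt (fun z : ℂ => (g : ℂ) * z + (g : ℂ) * (m : ℂ)) (g : ℂ) t := by
  simpa using ((hasDerivAt_id t).const_mul ((g : ℂ))).add_const ((g : ℂ) * m)

lemma hd_csn (g m : ℝ) (t : ℝ) :
    HasDerivAt (fun s : ℝ => csn g m s) ((g : ℂ) * ccs g m t) t := by
  simpa [csn, ccs, mul_comm] using ((hd_aff g m (t : ℂ)).csin).comp_ofReal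

lemma hd_ccs (g m : ℝ) (t : ℝ) :
    HasDerivAt (fun s : ℝ => ccs g m s) (-((g : ℂ) * csn g m t)) t := by
  simpa [csn, ccs, mul_comm] using ((hd_aff g m (t : ℂ)).ccos).comp_ofReal

lemma cd_cex (a : ℝ) : ContDiff ℝ (⊤ : ℕ∞) (fun t : ℝ => cex a t) := by
  unfold cex
  exact ((Complex.contDiff_exp : ContDiff ℂ (⊤ : ℕ∞) Complex.exp).restrict_scalars ℝ).comp
    (contDiff_const.mul Complex.ofRealCLM.contDiff)

lemma cd_csn (g m : ℝ) : ContDiff ℝ (⊤ : ℕ∞) (fun t : ℝ => csn g m t) := by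
  unfold csn
  exact ((Complex.contDiff_sin : ContDiff ℂ (⊤ : ℕ∞) Complex.sin).restrict_scalars ℝ).comp
    ((contDiff_const.mul Complex.ofRealCLM.contDiff).add contDiff_const)

lemma cd_ccs (g m : ℝ) : ContDiff ℝ (⊤ : ℕ∞) (fun t : ℝ => ccs g m t) := by
  unfold ccs
  exact ((Complex.contDiff_cos : ContDiff ℂ (⊤ : ℕ∞) Complex.cos).restrict_scalars ℝ).comp
    ((contDiff_const.mul Complex.ofRealCLM.contDiff).add contDiff_const)

lemma cd_comp (c : ℂ) (a b : ℝ) (f : ℝ → ℂ) (hf : ContDiff ℝ (⊤ : ℕ∞) f) :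
    ContDiff ℝ (⊤ : ℕ∞) (fun x : ℝ × ℝ × ℝ => c * cex a x.1 * cex b x.2.1 * f x.2.2) :=
  (((contDiff_const.mul ((cd_cex a).comp contDiff_fst)).mul
    ((cd_cex b).comp (contDiff_fst.comp contDiff_snd))).mul
    (hf.comp (contDiff_snd.comp contDiff_snd)))

lemma pd1_eval (c : ℂ) (a b : ℝ) (f : ℝ → ℂ) (x : ℝ × ℝ × ℝ) :
    deriv (fun t : ℝ => c * cex a t * cex b x.2.1 * f x.2.2) x.1
      = Complex.I * a * (c * cex a x.1 * cex b x.2.1 * f x.2.2) := by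
  rw [((((hd_cex a x.1).const_mul c).mul_const (cex b x.2.1)).mul_const (f x.2.2)).deriv]
  ring

lemma pd2_eval (c : ℂ) (a b : ℝ) (f : ℝ → ℂ) (x : ℝ × ℝ × ℝ) :
    deriv (fun t : ℝ => c * cex a x.1 * cex b t * f x.2.2) x.2.1
      = Complex.I * b * (c * cex a x.1 * cex b x.2.1 * f x.2.2) := by
  rw [(((hd_cex b x.2.1).const_mul (c * cex a x.1)).mul_const (f x.2.2)).deriv]
  ring

lemma pd3_sn_eval (c : ℂ) (a b g m : ℝ) (x : ℝ × ℝ × ℝ) :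
    deriv (fun t : ℝ => c * cex a x.1 * cex b x.2.1 * csn g m t) x.2.2
      = (g : ℂ) * (c * cex a x.1 * cex b x.2.1 * ccs g m x.2.2) := by
  rw [((hd_csn g m x.2.2).const_mul (c * cex a x.1 * cex b x.2.1)).deriv]
  ring

lemma pd3_cs_eval (c : ℂ) (a b g m : ℝ) (x : ℝ × ℝ × ℝ) :
    deriv (fun t : ℝ => c * cex a x.1 * cex b x.2.1 * ccs g m t) x.2.2
      = -((g : ℂ) * (c * cex a x.1 * cex b x.2.1 * csn g m x.2.2)) := by
  rw [((hd_ccs g m x.2.2).const_mul (c * cex a x.1 * cex b x.2.1)).deriv]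
  ring

lemma cex_per (aR L : ℝ) (k : ℕ) (h : aR * L = 2 * Real.pi * k) (t : ℝ) :
    cex aR (t + L) = cex aR t := by
  unfold cex
  have h2 : (aR : ℂ) * L = 2 * (Real.pi : ℂ) * k := by exact_mod_cast congrArg Complex.ofReal h
  have h3 : Complex.I * aR * ((t : ℝ) + (L : ℝ) : ℝ) =
      Complex.I * aR * t + ((k : ℤ) : ℂ) * (2 * (Real.pi : ℂ) * Complex.I) := by
    push_cast
    linear_combination Complex.I * h2
  rw [h3, Complex.exp_add, Complex.exp_int_mul_two_pi_mul_I, mul_one]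

set_option maxHeartbeats 2000000 in
/-- for frequencies in σ(l₁,l₂,l₃), the homogeneous Maxwell system with
polarization interface conditions has a non-trivial smooth solution. -/
theorem stmt17 (l₁ l₂ l₃p l₃m ε μ ω : ℝ)
    (hl₁ : 0 < l₁) (hl₂ : 0 < l₂) (hl₃p : 0 < l₃p) (hl₃m : 0 < l₃m)
    (hε : 0 < ε) (hμ : 0 < μ) (hω : 0 < ω)
    (k₁ k₂ k₃ : ℕ) (hk : (k₂, k₃) ≠ (0, 0))
    (hω2 : ω ^ 2 = 4 * π ^ 2 / (ε * μ) * ((k₁ : ℝ) ^ 2 / l₁ ^ 2 + (k₂ : ℝ) ^ 2 / l₂ ^ 2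
        + (k₃ : ℝ) ^ 2 / (4 * (l₃p + l₃m) ^ 2))) :
    ∃ E H : ℝ × ℝ × ℝ → ℂ × ℂ × ℂ,
      ContDiff ℝ (⊤ : ℕ∞) E ∧ ContDiff ℝ (⊤ : ℕ∞) H ∧
      (∀ x : ℝ × ℝ × ℝ, curl3 E x = (Complex.I * (ω : ℂ) * (μ : ℂ)) • H x) ∧
      (∀ x : ℝ × ℝ × ℝ, curl3 H x = (-(Complex.I * (ω : ℂ) * (ε : ℂ))) • E x) ∧
      (∀ x : ℝ × ℝ × ℝ, (E x).1 = 0) ∧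
      (∀ x : ℝ × ℝ × ℝ, x.2.2 = -l₃m ∨ x.2.2 = l₃p → (E x).2.1 = 0) ∧
      (∀ x : ℝ × ℝ × ℝ, E (x.1 + l₁, x.2.1, x.2.2) = E x ∧ E (x.1, x.2.1 + l₂, x.2.2) = E x ∧
        H (x.1 + l₁, x.2.1, x.2.2) = H x ∧ H (x.1, x.2.1 + l₂, x.2.2) = H x) ∧
      (∃ x : ℝ × ℝ × ℝ,
        (x.1 ∈ Set.Ioo 0 l₁ ∧ x.2.1 ∈ Set.Ioo 0 l₂ ∧ x.2.2 ∈ Set.Ioo (-l₃m) l₃p) ∧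
        E x ≠ 0) := by
  set l₃ : ℝ := l₃p + l₃m with hl₃def
  have hl₃ : 0 < l₃ := by positivity
  set a : ℝ := 2 * π * k₁ / l₁ with ha
  set b : ℝ := 2 * π * k₂ / l₂ with hb
  set g : ℝ := π * k₃ / l₃ with hg
  have key : a ^ 2 + b ^ 2 + g ^ 2 = ω ^ 2 * ε * μ := by
    rw [hω2, ha, hb, hg]
    field_simp
    ring
  have keyC : (a : ℂ) ^ 2 + (b : ℂ) ^ 2 + (g : ℂ) ^ 2 = (ω : ℂ) ^ 2 * ε * μ := by
    exact_mod_cast congrArg Complex.ofReal key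
  have hωμ : ((ω : ℂ) * (μ : ℂ)) ≠ 0 := by
    simp [Complex.ofReal_ne_zero, hω.ne', hμ.ne']
  have keyD : ((a : ℂ) ^ 2 + (b : ℂ) ^ 2 + (g : ℂ) ^ 2) / ((ω : ℂ) * (μ : ℂ))
      = (ω : ℂ) * (ε : ℂ) := by
    rw [div_eq_iff hωμ, keyC]; ring
  refine ⟨fun x => (0,
      (g : ℂ) * cex a x.1 * cex b x.2.1 * csn g l₃m x.2.2,
      Complex.I * (b : ℂ) * cex a x.1 * cex b x.2.1 * ccs g l₃m x.2.2),
    fun x => (Complex.I * ((b : ℂ) ^ 2 + (g : ℂ) ^ 2) / ((ω : ℂ) * (μ : ℂ)) * cex a x.1 * cex b x.2.1 * ccs g l₃m x.2.2,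
      -(Complex.I * (a : ℂ) * (b : ℂ)) / ((ω : ℂ) * (μ : ℂ)) * cex a x.1 * cex b x.2.1 * ccs g l₃m x.2.2,
      (a : ℂ) * (g : ℂ) / ((ω : ℂ) * (μ : ℂ)) * cex a x.1 * cex b x.2.1 * csn g l₃m x.2.2),
    ?_, ?_, ?_, ?_, ?_, ?_, ?_, ?_⟩
  · exact contDiff_const.prodMk ((cd_comp _ _ _ _ (cd_csn g l₃m)).prodMk
      (cd_comp _ _ _ _ (cd_ccs g l₃m)))
  · exact (cd_comp _ _ _ _ (cd_ccs g l₃m)).prodMk ((cd_comp _ _ _ _ (cd_ccs g l₃m)).prodMk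
      (cd_comp _ _ _ _ (cd_csn g l₃m)))
  · intro x
    simp only [curl3, pd1, pd2, pd3, pd1_eval, pd2_eval, pd3_sn_eval, pd3_cs_eval,
      deriv_const', Prod.smul_mk, smul_eq_mul, Prod.mk.injEq]
    refine ⟨?_, ?_, ?_⟩
    · field_simp [Complex.ofReal_ne_zero.mpr hω.ne', Complex.ofReal_ne_zero.mpr hμ.ne']
      ring_nf
      simp only [Complex.I_sq]
      ring
    · field_simp [Complex.ofReal_ne_zero.mpr hω.ne', Complex.ofReal_ne_zero.mpr hμ.ne']
      ring_nf
    · field_simp [Complex.ofReal_ne_zero.mpr hω.ne', Complex.ofReal_ne_zero.mpr hμ.ne']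
      ring_nf
  · intro x
    simp only [curl3, pd1, pd2, pd3, pd1_eval, pd2_eval, pd3_sn_eval, pd3_cs_eval,
      deriv_const', Prod.smul_mk, smul_eq_mul, Prod.mk.injEq]
    refine ⟨?_, ?_, ?_⟩
    · field_simp
      ring_nf
    · linear_combination (-(Complex.I) * (g : ℂ) * cex a x.1 * cex b x.2.1 * csn g l₃m x.2.2) * keyD
    · linear_combination (-(Complex.I) ^ 2 * (b : ℂ) * cex a x.1 * cex b x.2.1 * ccs g l₃m x.2.2) * keyD
  · intro x
    rfl
  · intro x hx
    show (g : ℂ) * cex a x.1 * cex b x.2.1 * csn g l₃m x.2.2 = 0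
    rcases hx with h | h
    · have hz : csn g l₃m x.2.2 = 0 := by
        rw [h]
        unfold csn
        rw [show ((g : ℂ) * ((-l₃m : ℝ) : ℂ) + (g : ℂ) * (l₃m : ℂ)) = 0 by push_cast; ring,
          Complex.sin_zero]
      rw [hz, mul_zero]
    · have harg : g * l₃p + g * l₃m = (k₃ : ℝ) * π := by
        rw [hg]; field_simp; ring
      have hz : csn g l₃m x.2.2 = 0 := by
        rw [h]
        unfold csn
        rw [show ((g : ℂ) * (l₃p : ℂ) + (g : ℂ) * (l₃m : ℂ)) = (((k₃ : ℝ) * π : ℝ) : ℂ) from by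
          exact_mod_cast congrArg Complex.ofReal harg,
          ← Complex.ofReal_sin, Real.sin_nat_mul_pi]
        norm_num
      rw [hz, mul_zero]
  · have h1 : a * l₁ = 2 * π * k₁ := by rw [ha]; field_simp
    have h2 : b * l₂ = 2 * π * k₂ := by rw [hb]; field_simp
    intro x
    refine ⟨?_, ?_, ?_, ?_⟩ <;>
      simp only [cex_per a l₁ k₁ h1, cex_per b l₂ k₂ h2]
  · rcases Nat.eq_zero_or_pos k₃ with h3 | h3
    · have hk2 : k₂ ≠ 0 := by rintro rfl; exact hk (by simp [h3])
      have hk2R : (0 : ℝ) < k₂ := by exact_mod_cast Nat.pos_of_ne_zero hk2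
      have hg0 : g = 0 := by rw [hg, h3]; simp
      have hbpos : 0 < b := by rw [hb]; positivity
      refine ⟨(l₁ / 2, l₂ / 2, (l₃p - l₃m) / 2),
        ⟨by rw [Set.mem_Ioo]; constructor <;> linarith,
         by rw [Set.mem_Ioo]; constructor <;> linarith,
         by rw [Set.mem_Ioo]; constructor <;> linarith⟩, ?_⟩
      intro h
      have h3' : Complex.I * (b : ℂ) * cex a (l₁ / 2) * cex b (l₂ / 2) *
          ccs g l₃m ((l₃p - l₃m) / 2) = 0 := by
        simpa using congrArg (fun p : ℂ × ℂ × ℂ => p.2.2) h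
      have hcs : ccs g l₃m ((l₃p - l₃m) / 2) = 1 := by
        unfold ccs
        rw [hg0]
        norm_num
      rw [hcs, mul_one] at h3'
      simp [Complex.I_ne_zero, Complex.ofReal_ne_zero, hbpos.ne', cex_ne_zero] at h3'
    · have hk3R : (1 : ℝ) ≤ k₃ := by exact_mod_cast h3
      have hk3R0 : (0 : ℝ) < k₃ := by linarith
      have hgpos : 0 < g := by rw [hg]; positivity
      set t₀ : ℝ := -l₃m + l₃ / (2 * k₃) with ht₀
      have hfracpos : 0 < l₃ / (2 * (k₃ : ℝ)) := by positivity
      have hfrac : l₃ / (2 * (k₃ : ℝ)) ≤ l₃ / 2 := by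
        gcongr
        linarith
      have harg : g * t₀ + g * l₃m = π / 2 := by
        rw [hg, ht₀]
        field_simp
        ring
      have hsn : csn g l₃m t₀ = 1 := by
        unfold csn
        rw [show ((g : ℂ) * (t₀ : ℂ) + (g : ℂ) * (l₃m : ℂ)) = ((π / 2 : ℝ) : ℂ) from by
          exact_mod_cast congrArg Complex.ofReal harg,
          ← Complex.ofReal_sin, Real.sin_pi_div_two]
        norm_num
      refine ⟨(l₁ / 2, l₂ / 2, t₀),
        ⟨by rw [Set.mem_Ioo]; constructor <;> linarith,
         by rw [Set.mem_Ioo]; constructor <;> linarith,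
         by rw [Set.mem_Ioo]; constructor <;> linarith⟩, ?_⟩
      intro h
      have h2' : (g : ℂ) * cex a (l₁ / 2) * cex b (l₂ / 2) * csn g l₃m t₀ = 0 := by
        simpa using congrArg (fun p : ℂ × ℂ × ℂ => p.2.1) h
      rw [hsn, mul_one] at h2'
      simp [Complex.ofReal_ne_zero, hgpos.ne', cex_ne_zero] at h2'
end

section
/- Let ω > 0 and suppose ω² = (4π²/(εμ))·(k₁²/l₁² + k₂²/l₂² + k₃²/(4(l₃⁺)²)) for some k₁, k₂ ∈ ℕ and k₃ ∈ ℕ with k₃ ≥ 1. Then there exist vector fields E, H : Ω → ℂ³ such that: (a) E and H vanish identically on Ω ∩ {x₃ < 0} and are smooth on Ω ∖ Γ; (b) curl E = iωμ·H and curl H = −iωε·E at every point of Ω ∖ Γ; (c) H₁ vanishes identically on Ω, and the components E₁ and E₂ extend continuously by zero across Γ (their one-sided limits from Ω ∩ {x₃ > 0} at every point of Γ equal 0); (d) the one-sided limits of E₁ and E₂ at every point of ∂horΩ equal 0; (e) E and H are l₁-periodic in x₁ and l₂-periodic in x₂; and (f) E is not identically zero on Ω. -/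
open Real Complex Filter Topology

/-- plane-wave factor -/
noncomputable def psiF (a b : ℝ) (x : ℝ × ℝ × ℝ) : ℂ :=
  Complex.exp (Complex.I * ((a * x.1 + b * x.2.1 : ℝ) : ℂ))

/-- truncated sine -/
noncomputable def sF (c : ℝ) (t : ℝ) : ℂ := if 0 < t then Complex.sin ((c * t : ℝ) : ℂ) else 0

/-- truncated cosine -/
noncomputable def cF (c : ℝ) (t : ℝ) : ℂ := if 0 < t then Complex.cos ((c * t : ℝ) : ℂ) else 0

/-- generic separated field component -/
noncomputable def Phi (a b : ℝ) (K : ℂ) (g : ℝ → ℂ) (x : ℝ × ℝ × ℝ) : ℂ :=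
  K * g x.2.2 * psiF a b x

lemma psiF_ne_zero (a b : ℝ) (x : ℝ × ℝ × ℝ) : psiF a b x ≠ 0 := Complex.exp_ne_zero _

lemma hasDerivAt_psi1 (a b : ℝ) (x₂ : ℝ) (t : ℝ) :
    HasDerivAt (fun s : ℝ => Complex.exp (Complex.I * ((a * s + b * x₂ : ℝ) : ℂ)))
      (Complex.I * a * Complex.exp (Complex.I * ((a * t + b * x₂ : ℝ) : ℂ))) t := by
  have h1 : HasDerivAt (fun s : ℝ => a * s + b * x₂) a t := by
    simpa using ((hasDerivAt_id t).const_mul a).add_const (b * x₂)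
  have h3 := (h1.ofReal_comp.const_mul Complex.I).cexp
  simpa [mul_comm, mul_left_comm] using h3

lemma hasDerivAt_psi2 (a b : ℝ) (x₁ : ℝ) (t : ℝ) :
    HasDerivAt (fun s : ℝ => Complex.exp (Complex.I * ((a * x₁ + b * s : ℝ) : ℂ)))
      (Complex.I * b * Complex.exp (Complex.I * ((a * x₁ + b * t : ℝ) : ℂ))) t := by
  have h1 : HasDerivAt (fun s : ℝ => a * x₁ + b * s) b t := by
    simpa using (((hasDerivAt_id t).const_mul b).const_add (a * x₁))
  have h3 := (h1.ofReal_comp.const_mul Complex.I).cexp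
  simpa [mul_comm, mul_left_comm] using h3

lemma hasDerivAt_sF (c : ℝ) {t : ℝ} (ht : t ≠ 0) :
    HasDerivAt (sF c) ((c : ℂ) * cF c t) t := by
  rcases ht.lt_or_gt with h | h
  · have hev : sF c =ᶠ[nhds t] fun _ => (0 : ℂ) := by
      filter_upwards [Iio_mem_nhds h] with s hs
      simp [sF, not_lt.2 (le_of_lt (Set.mem_Iio.mp hs))]
    have h0 : HasDerivAt (fun _ : ℝ => (0 : ℂ)) 0 t := hasDerivAt_const _ _
    have h1 := h0.congr_of_eventuallyEq hev
    simpa [cF, not_lt.2 h.le] using h1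
  · have hev : sF c =ᶠ[nhds t] fun s : ℝ => Complex.sin ((c : ℂ) * (s : ℂ)) := by
      filter_upwards [Ioi_mem_nhds h] with s hs
      simp [sF, Set.mem_Ioi.mp hs]
    have hz : HasDerivAt (fun z : ℂ => Complex.sin ((c : ℂ) * z))
        (Complex.cos ((c : ℂ) * (t : ℂ)) * c) (t : ℂ) := by
      have : HasDerivAt (fun z : ℂ => (c : ℂ) * z) (c : ℂ) (t : ℂ) := by
        simpa using (hasDerivAt_id (t : ℂ)).const_mul (c : ℂ)
      exact this.csin
    have h2 := hz.comp_ofReal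
    have h3 := h2.congr_of_eventuallyEq hev
    simpa [cF, h, mul_comm] using h3

lemma hasDerivAt_cF (c : ℝ) {t : ℝ} (ht : t ≠ 0) :
    HasDerivAt (cF c) (-((c : ℂ) * sF c t)) t := by
  rcases ht.lt_or_gt with h | h
  · have hev : cF c =ᶠ[nhds t] fun _ => (0 : ℂ) := by
      filter_upwards [Iio_mem_nhds h] with s hs
      simp [cF, not_lt.2 (le_of_lt (Set.mem_Iio.mp hs))]
    have h0 : HasDerivAt (fun _ : ℝ => (0 : ℂ)) 0 t := hasDerivAt_const _ _
    have h1 := h0.congr_of_eventuallyEq hev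
    simpa [sF, not_lt.2 h.le] using h1
  · have hev : cF c =ᶠ[nhds t] fun s : ℝ => Complex.cos ((c : ℂ) * (s : ℂ)) := by
      filter_upwards [Ioi_mem_nhds h] with s hs
      simp [cF, Set.mem_Ioi.mp hs]
    have hz : HasDerivAt (fun z : ℂ => Complex.cos ((c : ℂ) * z))
        (-Complex.sin ((c : ℂ) * (t : ℂ)) * c) (t : ℂ) := by
      have : HasDerivAt (fun z : ℂ => (c : ℂ) * z) (c : ℂ) (t : ℂ) := by
        simpa using (hasDerivAt_id (t : ℂ)).const_mul (c : ℂ)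
      exact this.ccos
    have h2 := hz.comp_ofReal
    have h3 := h2.congr_of_eventuallyEq hev
    simpa [sF, h, mul_comm, mul_left_comm] using h3

lemma pd1_Phi (a b : ℝ) (K : ℂ) (g : ℝ → ℂ) (x : ℝ × ℝ × ℝ) :
    pd1 (Phi a b K g) x = Complex.I * a * Phi a b K g x := by
  unfold pd1 Phi psiF
  simp only
  have := ((hasDerivAt_psi1 a b x.2.1 x.1).const_mul (K * g x.2.2)).deriv
  rw [this]; ring

lemma pd2_Phi (a b : ℝ) (K : ℂ) (g : ℝ → ℂ) (x : ℝ × ℝ × ℝ) :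
    pd2 (Phi a b K g) x = Complex.I * b * Phi a b K g x := by
  unfold pd2 Phi psiF
  simp only
  have := ((hasDerivAt_psi2 a b x.1 x.2.1).const_mul (K * g x.2.2)).deriv
  rw [this]; ring

lemma pd3_Phi (a b : ℝ) (K : ℂ) {g : ℝ → ℂ} {d : ℂ} (x : ℝ × ℝ × ℝ)
    (hg : HasDerivAt g d x.2.2) :
    pd3 (Phi a b K g) x = K * d * psiF a b x := by
  unfold pd3 Phi psiF
  simp only
  have := ((hg.const_mul K).mul_const
      (Complex.exp (Complex.I * ((a * x.1 + b * x.2.1 : ℝ) : ℂ)))).deriv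
  rw [this]

lemma continuous_psiF (a b : ℝ) : Continuous (psiF a b) := by
  unfold psiF; fun_prop

lemma continuous_sin3 (c : ℝ) :
    Continuous (fun x : ℝ × ℝ × ℝ => Complex.sin ((c : ℂ) * (x.2.2 : ℂ))) := by
  fun_prop

lemma tendsto_Phi_sF (a b c : ℝ) (K : ℂ) (p : ℝ × ℝ × ℝ) (L : Filter (ℝ × ℝ × ℝ))
    (hL : L ≤ nhds p)
    (hsin : Complex.sin ((c : ℂ) * (p.2.2 : ℂ)) = 0)
    (hpos : ∀ᶠ y in L, 0 < y.2.2) :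
    Tendsto (Phi a b K (sF c)) L (nhds 0) := by
  have hF : Continuous (fun y : ℝ × ℝ × ℝ => K * Complex.sin ((c : ℂ) * (y.2.2 : ℂ)) * psiF a b y) :=
    (continuous_const.mul (continuous_sin3 c)).mul (continuous_psiF a b)
  have h0 : Tendsto (fun y : ℝ × ℝ × ℝ => K * Complex.sin ((c : ℂ) * (y.2.2 : ℂ)) * psiF a b y)
      L (nhds 0) := by
    have := hF.tendsto p
    rw [hsin] at this
    simpa using this.mono_left hL
  refine h0.congr' ?_
  filter_upwards [hpos] with y hy
  simp [Phi, sF, hy, Complex.ofReal_mul]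

lemma tendsto_Phi_neg (a b : ℝ) (K : ℂ) (g : ℝ → ℂ) (L : Filter (ℝ × ℝ × ℝ))
    (hg : ∀ t < 0, g t = 0) (hneg : ∀ᶠ y in L, y.2.2 < 0) :
    Tendsto (Phi a b K g) L (nhds 0) := by
  refine Tendsto.congr' ?_ tendsto_const_nhds
  filter_upwards [hneg] with y hy
  simp [Phi, hg _ hy]

lemma contDiff_field (a b c : ℝ) (K : ℂ) (T : ℂ → ℂ) (hT : ContDiff ℂ ⊤ T) :
    ContDiff ℝ (⊤ : ℕ∞) (fun x : ℝ × ℝ × ℝ => K * T ((c : ℂ) * (x.2.2 : ℂ)) * psiF a b x) := by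
  have h22 : ContDiff ℝ (⊤ : ℕ∞) (fun x : ℝ × ℝ × ℝ => (x.2.2 : ℂ)) :=
    Complex.ofRealCLM.contDiff.comp (contDiff_snd.comp contDiff_snd)
  have hTc : ContDiff ℝ (⊤ : ℕ∞) (fun x : ℝ × ℝ × ℝ => T ((c : ℂ) * (x.2.2 : ℂ))) :=
    (((ContDiff.restrict_scalars ℝ (𝕜' := ℂ) hT).of_le le_top).comp (contDiff_const.mul h22))
  have hre : ContDiff ℝ (⊤ : ℕ∞) (fun x : ℝ × ℝ × ℝ => a * x.1 + b * x.2.1) :=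
    (contDiff_const.mul contDiff_fst).add (contDiff_const.mul (contDiff_fst.comp contDiff_snd))
  have hpsi : ContDiff ℝ (⊤ : ℕ∞) (psiF a b) := by
    unfold psiF
    exact (ContDiff.restrict_scalars ℝ (𝕜' := ℂ) Complex.contDiff_exp).comp
      (contDiff_const.mul (Complex.ofRealCLM.contDiff.comp hre))
  exact (contDiff_const.mul hTc).mul hpsi

lemma psiF_per1 (a b l₁ : ℝ) (k : ℕ) (h : a * l₁ = 2 * Real.pi * k) (x : ℝ × ℝ × ℝ) :
    psiF a b (x.1 + l₁, x.2.1, x.2.2) = psiF a b x := by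
  unfold psiF
  simp only
  have h1 : ((a * (x.1 + l₁) + b * x.2.1 : ℝ) : ℂ)
      = ((a * x.1 + b * x.2.1 : ℝ) : ℂ) + ((a * l₁ : ℝ) : ℂ) := by push_cast; ring
  rw [h1, mul_add, Complex.exp_add]
  have h2 : Complex.I * ((a * l₁ : ℝ) : ℂ) = ((k : ℤ) : ℂ) * (2 * Real.pi * Complex.I) := by
    rw [h]; push_cast; ring
  rw [h2, Complex.exp_int_mul_two_pi_mul_I, mul_one]

lemma psiF_per2 (a b l₂ : ℝ) (k : ℕ) (h : b * l₂ = 2 * Real.pi * k) (x : ℝ × ℝ × ℝ) :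
    psiF a b (x.1, x.2.1 + l₂, x.2.2) = psiF a b x := by
  unfold psiF
  simp only
  have h1 : ((a * x.1 + b * (x.2.1 + l₂) : ℝ) : ℂ)
      = ((a * x.1 + b * x.2.1 : ℝ) : ℂ) + ((b * l₂ : ℝ) : ℂ) := by push_cast; ring
  rw [h1, mul_add, Complex.exp_add]
  have h2 : Complex.I * ((b * l₂ : ℝ) : ℂ) = ((k : ℤ) : ℂ) * (2 * Real.pi * Complex.I) := by
    rw [h]; push_cast; ring
  rw [h2, Complex.exp_int_mul_two_pi_mul_I, mul_one]

lemma curl3_eq (f1 f2 f3 : ℝ × ℝ × ℝ → ℂ) (x : ℝ × ℝ × ℝ) :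
    curl3 (fun y => (f1 y, f2 y, f3 y)) x =
      (pd2 f3 x - pd3 f2 x, pd3 f1 x - pd1 f3 x, pd1 f2 x - pd2 f1 x) := rfl

lemma sF_of_pos (c : ℝ) {t : ℝ} (h : 0 < t) : sF c t = Complex.sin ((c : ℂ) * (t : ℂ)) := by
  rw [sF, if_pos h]; norm_cast

lemma cF_of_pos (c : ℝ) {t : ℝ} (h : 0 < t) : cF c t = Complex.cos ((c : ℂ) * (t : ℂ)) := by
  rw [cF, if_pos h]; norm_cast

lemma pd1_zero (x : ℝ × ℝ × ℝ) : pd1 (fun _ : ℝ × ℝ × ℝ => (0 : ℂ)) x = 0 := by simp [pd1]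
lemma pd2_zero (x : ℝ × ℝ × ℝ) : pd2 (fun _ : ℝ × ℝ × ℝ => (0 : ℂ)) x = 0 := by simp [pd2]
lemma pd3_zero (x : ℝ × ℝ × ℝ) : pd3 (fun _ : ℝ × ℝ × ℝ => (0 : ℂ)) x = 0 := by simp [pd3]

/-- for frequencies in σ(l₁,l₂,l₃⁺), the homogeneous Maxwell system with
polarization interface conditions has a non-trivial solution supported in the upper half. -/
theorem stmt18 (l₁ l₂ l₃p l₃m ε μ ω : ℝ)
    (hl₁ : 0 < l₁) (hl₂ : 0 < l₂) (hl₃p : 0 < l₃p) (hl₃m : 0 < l₃m)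
    (hε : 0 < ε) (hμ : 0 < μ) (hω : 0 < ω)
    (k₁ k₂ k₃ : ℕ) (hk₃ : 1 ≤ k₃)
    (hω2 : ω ^ 2 = 4 * π ^ 2 / (ε * μ) * ((k₁ : ℝ) ^ 2 / l₁ ^ 2 + (k₂ : ℝ) ^ 2 / l₂ ^ 2
        + (k₃ : ℝ) ^ 2 / (4 * l₃p ^ 2)))
    (Ω Γ bdHor : Set (ℝ × ℝ × ℝ))
    (hΩ : Ω = {x | x.1 ∈ Set.Ioo 0 l₁ ∧ x.2.1 ∈ Set.Ioo 0 l₂ ∧ x.2.2 ∈ Set.Ioo (-l₃m) l₃p})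
    (hΓ : Γ = {x | x.1 ∈ Set.Ioo 0 l₁ ∧ x.2.1 ∈ Set.Ioo 0 l₂ ∧ x.2.2 = 0})
    (hbd : bdHor = {x | x.1 ∈ Set.Ioo 0 l₁ ∧ x.2.1 ∈ Set.Ioo 0 l₂ ∧
        (x.2.2 = -l₃m ∨ x.2.2 = l₃p)}) :
    ∃ E H : ℝ × ℝ × ℝ → ℂ × ℂ × ℂ,
      -- (a) vanishing below the interface, smooth away from the interface
      (∀ x ∈ Ω, x.2.2 < 0 → E x = 0 ∧ H x = 0) ∧
      ContDiffOn ℝ (⊤ : ℕ∞) E (Ω \ Γ) ∧ ContDiffOn ℝ (⊤ : ℕ∞) H (Ω \ Γ) ∧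
      -- (b) Maxwell's equations away from the interface
      (∀ x ∈ Ω \ Γ, curl3 E x = (Complex.I * (ω : ℂ) * (μ : ℂ)) • H x ∧
        curl3 H x = (-(Complex.I * (ω : ℂ) * (ε : ℂ))) • E x) ∧
      -- (c) H₁ vanishes on Ω; E₁, E₂ tend to zero at Γ from above
      (∀ x ∈ Ω, (H x).1 = 0) ∧
      (∀ p ∈ Γ,
        Tendsto (fun y => (E y).1) (nhdsWithin p (Ω ∩ {y | 0 < y.2.2})) (nhds 0) ∧
        Tendsto (fun y => (E y).2.1) (nhdsWithin p (Ω ∩ {y | 0 < y.2.2})) (nhds 0)) ∧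
      -- (d) E₁, E₂ tend to zero at the horizontal boundaries
      (∀ p ∈ bdHor,
        Tendsto (fun y => (E y).1) (nhdsWithin p Ω) (nhds 0) ∧
        Tendsto (fun y => (E y).2.1) (nhdsWithin p Ω) (nhds 0)) ∧
      -- (e) periodicity
      (∀ x : ℝ × ℝ × ℝ, E (x.1 + l₁, x.2.1, x.2.2) = E x ∧ E (x.1, x.2.1 + l₂, x.2.2) = E x ∧
        H (x.1 + l₁, x.2.1, x.2.2) = H x ∧ H (x.1, x.2.1 + l₂, x.2.2) = H x) ∧
      -- (f) non-triviality
      (∃ x ∈ Ω, E x ≠ 0) := by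
  have hl₁0 : l₁ ≠ 0 := hl₁.ne'
  have hl₂0 : l₂ ≠ 0 := hl₂.ne'
  have hl₃p0 : l₃p ≠ 0 := hl₃p.ne'
  have hε0 : ε ≠ 0 := hε.ne'
  have hμ0 : μ ≠ 0 := hμ.ne'
  have hk3R : (1 : ℝ) ≤ (k₃ : ℝ) := by exact_mod_cast hk₃
  set a : ℝ := 2 * π * k₁ / l₁ with ha
  set b : ℝ := 2 * π * k₂ / l₂ with hb
  set c : ℝ := π * k₃ / l₃p with hc
  have hcpos : 0 < c := by
    rw [hc]; exact div_pos (mul_pos Real.pi_pos (by linarith)) hl₃p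
  have hkeyR : a ^ 2 + b ^ 2 + c ^ 2 = ω ^ 2 * ε * μ := by
    rw [ha, hb, hc, hω2]; field_simp; ring
  have hkey : (a : ℂ) ^ 2 + (b : ℂ) ^ 2 + (c : ℂ) ^ 2 = (ω : ℂ) ^ 2 * (ε : ℂ) * (μ : ℂ) := by
    have := congrArg (fun r : ℝ => (r : ℂ)) hkeyR
    push_cast at this
    exact this
  set A : ℂ := -Complex.I * ((b : ℂ) ^ 2 + (c : ℂ) ^ 2) with hA
  set B : ℂ := Complex.I * (a : ℂ) * (b : ℂ) with hB
  set Cc : ℂ := (a : ℂ) * (c : ℂ) with hCc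
  set P : ℂ := -((c : ℂ) * (ω : ℂ) * (ε : ℂ)) with hP
  set Q : ℂ := Complex.I * ((b : ℂ) * (ω : ℂ) * (ε : ℂ)) with hQ
  have hal1 : a * l₁ = 2 * π * (k₁ : ℝ) := by rw [ha]; field_simp
  have hbl2 : b * l₂ = 2 * π * (k₂ : ℝ) := by rw [hb]; field_simp
  refine ⟨fun x => (Phi a b A (sF c) x, Phi a b B (sF c) x, Phi a b Cc (cF c) x),
        fun x => ((0 : ℂ), Phi a b P (cF c) x, Phi a b Q (sF c) x),
        ?_, ?_, ?_, ?_, ?_, ?_, ?_, ?_, ?_⟩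
  · -- (a)
    intro x _ hneg
    have hs : sF c x.2.2 = 0 := if_neg (not_lt.2 hneg.le)
    have hcc : cF c x.2.2 = 0 := if_neg (not_lt.2 hneg.le)
    constructor <;> simp [Phi, hs, hcc, Prod.ext_iff]
  · -- contdiff E
    intro x hx
    have hxΩ := hx.1
    rw [hΩ] at hxΩ
    have hx3 : x.2.2 ≠ 0 := fun h => hx.2 (by rw [hΓ]; exact ⟨hxΩ.1, hxΩ.2.1, h⟩)
    apply ContDiffAt.contDiffWithinAt
    rcases hx3.lt_or_gt with h | h
    · have hev : (fun x => (Phi a b A (sF c) x, Phi a b B (sF c) x, Phi a b Cc (cF c) x))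
          =ᶠ[nhds x] fun _ => ((0 : ℂ), (0 : ℂ), (0 : ℂ)) := by
        have hopen : IsOpen {y : ℝ × ℝ × ℝ | y.2.2 < 0} :=
          isOpen_lt (continuous_snd.comp continuous_snd) continuous_const
        filter_upwards [hopen.eventually_mem h] with y hy
        have : ¬ (0 : ℝ) < y.2.2 := not_lt.2 (le_of_lt hy)
        simp [Phi, sF, cF, this]
      exact contDiffAt_const.congr_of_eventuallyEq hev
    · have hsm : ContDiff ℝ (⊤ : ℕ∞) (fun x : ℝ × ℝ × ℝ =>
          (A * Complex.sin ((c : ℂ) * (x.2.2 : ℂ)) * psiF a b x,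
           B * Complex.sin ((c : ℂ) * (x.2.2 : ℂ)) * psiF a b x,
           Cc * Complex.cos ((c : ℂ) * (x.2.2 : ℂ)) * psiF a b x)) :=
        ContDiff.prodMk (contDiff_field a b c A _ Complex.contDiff_sin)
          (ContDiff.prodMk (contDiff_field a b c B _ Complex.contDiff_sin)
            (contDiff_field a b c Cc _ Complex.contDiff_cos))
      have hev : (fun x => (Phi a b A (sF c) x, Phi a b B (sF c) x, Phi a b Cc (cF c) x))
          =ᶠ[nhds x] (fun x : ℝ × ℝ × ℝ =>
          (A * Complex.sin ((c : ℂ) * (x.2.2 : ℂ)) * psiF a b x,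
           B * Complex.sin ((c : ℂ) * (x.2.2 : ℂ)) * psiF a b x,
           Cc * Complex.cos ((c : ℂ) * (x.2.2 : ℂ)) * psiF a b x)) := by
        have hopen : IsOpen {y : ℝ × ℝ × ℝ | 0 < y.2.2} :=
          isOpen_lt continuous_const (continuous_snd.comp continuous_snd)
        filter_upwards [hopen.eventually_mem h] with y hy
        have hy' : (0:ℝ) < y.2.2 := hy
        simp only [Phi, sF_of_pos c hy', cF_of_pos c hy']
      exact hsm.contDiffAt.congr_of_eventuallyEq hev
  · -- contdiff H
    intro x hx
    have hxΩ := hx.1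
    rw [hΩ] at hxΩ
    have hx3 : x.2.2 ≠ 0 := fun h => hx.2 (by rw [hΓ]; exact ⟨hxΩ.1, hxΩ.2.1, h⟩)
    apply ContDiffAt.contDiffWithinAt
    rcases hx3.lt_or_gt with h | h
    · have hev : (fun x => ((0 : ℂ), Phi a b P (cF c) x, Phi a b Q (sF c) x))
          =ᶠ[nhds x] fun _ => ((0 : ℂ), (0 : ℂ), (0 : ℂ)) := by
        have hopen : IsOpen {y : ℝ × ℝ × ℝ | y.2.2 < 0} :=
          isOpen_lt (continuous_snd.comp continuous_snd) continuous_const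
        filter_upwards [hopen.eventually_mem h] with y hy
        have : ¬ (0 : ℝ) < y.2.2 := not_lt.2 (le_of_lt hy)
        simp [Phi, sF, cF, this]
      exact contDiffAt_const.congr_of_eventuallyEq hev
    · have hsm : ContDiff ℝ (⊤ : ℕ∞) (fun x : ℝ × ℝ × ℝ =>
          ((0 : ℂ),
           P * Complex.cos ((c : ℂ) * (x.2.2 : ℂ)) * psiF a b x,
           Q * Complex.sin ((c : ℂ) * (x.2.2 : ℂ)) * psiF a b x)) :=
        contDiff_const.prodMk
          (ContDiff.prodMk (contDiff_field a b c P _ Complex.contDiff_cos)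
            (contDiff_field a b c Q _ Complex.contDiff_sin))
      have hev : (fun x => ((0 : ℂ), Phi a b P (cF c) x, Phi a b Q (sF c) x))
          =ᶠ[nhds x] (fun x : ℝ × ℝ × ℝ =>
          ((0 : ℂ),
           P * Complex.cos ((c : ℂ) * (x.2.2 : ℂ)) * psiF a b x,
           Q * Complex.sin ((c : ℂ) * (x.2.2 : ℂ)) * psiF a b x)) := by
        have hopen : IsOpen {y : ℝ × ℝ × ℝ | 0 < y.2.2} :=
          isOpen_lt continuous_const (continuous_snd.comp continuous_snd)
        filter_upwards [hopen.eventually_mem h] with y hy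
        have hy' : (0:ℝ) < y.2.2 := hy
        simp only [Phi, sF_of_pos c hy', cF_of_pos c hy']
      exact hsm.contDiffAt.congr_of_eventuallyEq hev
  · -- (b) Maxwell
    intro x hx
    have hxΩ := hx.1
    rw [hΩ] at hxΩ
    have hx3 : x.2.2 ≠ 0 := fun h => hx.2 (by rw [hΓ]; exact ⟨hxΩ.1, hxΩ.2.1, h⟩)
    constructor
    · refine Eq.trans (curl3_eq (Phi a b A (sF c)) (Phi a b B (sF c)) (Phi a b Cc (cF c)) x) ?_
      rw [pd3_Phi a b B x (hasDerivAt_sF c hx3), pd3_Phi a b A x (hasDerivAt_sF c hx3)]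
      simp only [pd1_Phi, pd2_Phi, pd2_Phi]
      simp only [Phi, Prod.smul_mk, smul_eq_mul, Prod.mk.injEq, hA, hB, hCc, hP, hQ]
      refine ⟨by ring, ?_, ?_⟩
      · linear_combination (-Complex.I * (c : ℂ) * cF c x.2.2 * psiF a b x) * hkey
      · linear_combination (Complex.I ^ 2 * (b : ℂ) * sF c x.2.2 * psiF a b x) * hkey
    · refine Eq.trans (curl3_eq (fun _ => (0 : ℂ)) (Phi a b P (cF c)) (Phi a b Q (sF c)) x) ?_
      rw [pd3_Phi a b P x (hasDerivAt_cF c hx3)]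
      simp only [pd1_Phi, pd2_Phi, pd1_zero, pd2_zero, pd3_zero]
      simp only [Phi, Prod.smul_mk, smul_eq_mul, Prod.mk.injEq, hA, hB, hCc, hP, hQ]
      refine ⟨?_, by ring, by ring⟩
      linear_combination (-(c : ℂ) ^ 2 * (ω : ℂ) * (ε : ℂ) * sF c x.2.2 * psiF a b x) * Complex.I_sq
  · -- (c) H₁ = 0
    intro x _; rfl
  · -- (c) limits at Γ
    intro p hp
    rw [hΓ] at hp
    have hsin : Complex.sin ((c : ℂ) * (p.2.2 : ℂ)) = 0 := by
      rw [hp.2.2]; simp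
    have hpos : ∀ᶠ y in nhdsWithin p (Ω ∩ {y | 0 < y.2.2}), 0 < y.2.2 := by
      filter_upwards [self_mem_nhdsWithin] with y hy
      exact hy.2
    exact ⟨tendsto_Phi_sF a b c A p _ nhdsWithin_le_nhds hsin hpos,
           tendsto_Phi_sF a b c B p _ nhdsWithin_le_nhds hsin hpos⟩
  · -- (d) limits at horizontal boundary
    intro p hp
    rw [hbd] at hp
    rcases hp.2.2 with h | h
    · have hopen : IsOpen {y : ℝ × ℝ × ℝ | y.2.2 < 0} :=
        isOpen_lt (continuous_snd.comp continuous_snd) continuous_const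
      have hmem : p ∈ {y : ℝ × ℝ × ℝ | y.2.2 < 0} := by
        simp only [Set.mem_setOf_eq, h]; linarith
      have hneg : ∀ᶠ y in nhdsWithin p Ω, y.2.2 < 0 :=
        (hopen.eventually_mem hmem).filter_mono nhdsWithin_le_nhds
      have hz : ∀ t < (0 : ℝ), sF c t = 0 := fun t ht => if_neg (not_lt.2 ht.le)
      exact ⟨tendsto_Phi_neg a b A (sF c) _ hz hneg, tendsto_Phi_neg a b B (sF c) _ hz hneg⟩
    · have hopen : IsOpen {y : ℝ × ℝ × ℝ | 0 < y.2.2} :=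
        isOpen_lt continuous_const (continuous_snd.comp continuous_snd)
      have hmem : p ∈ {y : ℝ × ℝ × ℝ | 0 < y.2.2} := by
        simp only [Set.mem_setOf_eq, h]; linarith
      have hpos : ∀ᶠ y in nhdsWithin p Ω, 0 < y.2.2 :=
        (hopen.eventually_mem hmem).filter_mono nhdsWithin_le_nhds
      have hctR : c * l₃p = (k₃ : ℝ) * π := by rw [hc]; field_simp
      have hct : (c : ℂ) * (l₃p : ℂ) = (((k₃ : ℝ) * π : ℝ) : ℂ) := by
        rw [← Complex.ofReal_mul, hctR]
      have hsin : Complex.sin ((c : ℂ) * (p.2.2 : ℂ)) = 0 := by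
        rw [h, hct, ← Complex.ofReal_sin, Real.sin_nat_mul_pi, Complex.ofReal_zero]
      exact ⟨tendsto_Phi_sF a b c A p _ nhdsWithin_le_nhds hsin hpos,
             tendsto_Phi_sF a b c B p _ nhdsWithin_le_nhds hsin hpos⟩
  · -- (e) periodicity
    intro x
    have e1 := psiF_per1 a b l₁ k₁ hal1 x
    have e2 := psiF_per2 a b l₂ k₂ hbl2 x
    refine ⟨?_, ?_, ?_, ?_⟩ <;> simp [Phi, e1, e2]
  · -- (f) nontriviality
    have hk3pos : (0 : ℝ) < k₃ := by linarith
    set t : ℝ := l₃p / (2 * k₃) with htdef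
    have htpos : 0 < t := div_pos hl₃p (by positivity)
    have htlt : t < l₃p := by
      rw [htdef, div_lt_iff₀ (by positivity)]
      nlinarith
    refine ⟨(l₁ / 2, l₂ / 2, t), ?_, ?_⟩
    · rw [hΩ]
      refine ⟨⟨by linarith, by linarith⟩, ⟨by linarith, by linarith⟩, by linarith, htlt⟩
    · intro heq
      have h1 := congrArg Prod.fst heq
      simp only [Prod.fst_zero] at h1
      have hct : c * t = π / 2 := by
        rw [hc, htdef]; field_simp
      have hsF : sF c t = 1 := by
        rw [sF, if_pos htpos, hct]
        rw [show ((π / 2 : ℝ) : ℂ) = ((π / 2 : ℝ) : ℂ) from rfl, ← Complex.ofReal_sin]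
        simp [Real.sin_pi_div_two]
      have hAne : A ≠ 0 := by
        rw [hA]
        apply mul_ne_zero (neg_ne_zero.2 Complex.I_ne_zero)
        have : (b : ℂ) ^ 2 + (c : ℂ) ^ 2 = ((b ^ 2 + c ^ 2 : ℝ) : ℂ) := by push_cast; ring
        rw [this, Complex.ofReal_ne_zero]
        positivity
      have : Phi a b A (sF c) (l₁ / 2, l₂ / 2, t) ≠ 0 := by
        unfold Phi
        simp only [hsF]
        exact mul_ne_zero (by simpa using hAne) (psiF_ne_zero a b _)
      exact this h1
end

section
/- Let k₁ ∈ ℕ with k₁ ≥ 1 and suppose ω² = 4π²k₁²/(εμ·l₁²). Define E : ℝ³ → ℂ³ by E(x) = (0, sin(2πk₁x₁/l₁), 0) and H := 0. Then: (a) ∂₁²E₂ + ω²εμ·E₂ = 0 at every point of ℝ³, and E₁ = E₃ = 0 and H = 0 identically, so that (E,H) satisfies all six homogeneous Helmholtz-type equations ΔE₁ + ω²εμE₁ = 0, ΔH₁ + ω²εμH₁ = 0, ∂₁²E₂ + ω²εμE₂ = ∂₂∂₁E₁ + iωμ∂₃H₁, ∂₁²H₂ + ω²εμH₂ = ∂₂∂₁H₁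 − iωε∂₃E₁, ∂₁²E₃ + ω²εμE₃ = ∂₃∂₁E₁ − iωμ∂₂H₁, ∂₁²H₃ + ω²εμH₃ = ∂₃∂₁H₁ + iωε∂₂E₁ pointwise; but (b) curl E(0) = (0, 0, 2πk₁/l₁) ≠ 0 = iωμ·H(0), so (E,H) does not satisfy curl E = iωμ·H. -/
open Real Complex Filter Topology

/-!
At the resonant frequency `ω²εμ = c²`, `c = 2πk₁/l₁`, the function `sin (c x₁)` solves
`∂₁²u + ω²εμ u = 0`. Taking it as `E₂`, with `E₁ = E₃ = 0` and `H = 0`, satisfies every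
Helmholtz-type equation (all but the `E₂`-equation have both sides zero), yet the third component
of `curl E` is `∂₁E₂`, which equals `c ≠ 0` at the origin.
-/

lemma hasDerivAt_ofReal_sin_mul (c t : ℝ) :
    HasDerivAt (fun s : ℝ => ((Real.sin (c * s) : ℝ) : ℂ)) ((c * Real.cos (c * t) : ℝ) : ℂ) t := by
  have h := ((hasDerivAt_id t).const_mul c).sin
  simp only [id, mul_one] at h
  exact (h.congr_deriv (mul_comm _ _)).ofReal_comp

lemma hasDerivAt_ofReal_cos_mul (c t : ℝ) :
    HasDerivAt (fun s : ℝ => ((c * Real.cos (c * s) : ℝ) : ℂ))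
      ((-(c ^ 2) * Real.sin (c * t) : ℝ) : ℂ) t := by
  have h := (((hasDerivAt_id t).const_mul c).cos).const_mul c
  simp only [id, mul_one] at h
  exact (h.congr_deriv (by ring)).ofReal_comp

lemma pd1_ofReal_sin_mul_fst (c : ℝ) :
    pd1 (fun y : ℝ × ℝ × ℝ => ((Real.sin (c * y.1) : ℝ) : ℂ))
      = fun y => ((c * Real.cos (c * y.1) : ℝ) : ℂ) :=
  funext fun y => (hasDerivAt_ofReal_sin_mul c y.1).deriv

lemma pd1_pd1_ofReal_sin_mul_fst (c : ℝ) (x : ℝ × ℝ × ℝ) :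
    pd1 (pd1 fun y : ℝ × ℝ × ℝ => ((Real.sin (c * y.1) : ℝ) : ℂ)) x
      = ((-(c ^ 2) * Real.sin (c * x.1) : ℝ) : ℂ) := by
  rw [pd1_ofReal_sin_mul_fst]
  exact (hasDerivAt_ofReal_cos_mul c x.1).deriv

theorem stmt19_general (l₁ ε μ ω : ℝ)
    (hl₁ : 0 < l₁) (hε : 0 < ε) (hμ : 0 < μ)
    (k₁ : ℕ) (hk₁ : 1 ≤ k₁)
    (hω2 : ω ^ 2 = 4 * π ^ 2 * (k₁ : ℝ) ^ 2 / (ε * μ * l₁ ^ 2))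
    (E H : ℝ × ℝ × ℝ → ℂ × ℂ × ℂ)
    (hE : E = fun x => ((0 : ℂ), ((Real.sin (2 * π * (k₁ : ℝ) * x.1 / l₁) : ℝ) : ℂ), (0 : ℂ)))
    (hH : H = fun _ => (0 : ℂ × ℂ × ℂ)) :
    -- (a) the six homogeneous Helmholtz-type equations
    (∀ x : ℝ × ℝ × ℝ,
      pd1 (pd1 (fun y => (E y).2.1)) x
        + ((ω : ℂ) ^ 2 * (ε : ℂ) * (μ : ℂ)) * (E x).2.1 = 0) ∧
    (∀ x : ℝ × ℝ × ℝ, (E x).1 = 0 ∧ (E x).2.2 = 0 ∧ H x = 0) ∧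
    (∀ x : ℝ × ℝ × ℝ,
      lap (fun y => (E y).1) x + ((ω : ℂ) ^ 2 * (ε : ℂ) * (μ : ℂ)) * (E x).1 = 0) ∧
    (∀ x : ℝ × ℝ × ℝ,
      lap (fun y => (H y).1) x + ((ω : ℂ) ^ 2 * (ε : ℂ) * (μ : ℂ)) * (H x).1 = 0) ∧
    (∀ x : ℝ × ℝ × ℝ,
      pd1 (pd1 (fun y => (E y).2.1)) x + ((ω : ℂ) ^ 2 * (ε : ℂ) * (μ : ℂ)) * (E x).2.1
        = pd2 (pd1 (fun y => (E y).1)) x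
          + Complex.I * (ω : ℂ) * (μ : ℂ) * pd3 (fun y => (H y).1) x) ∧
    (∀ x : ℝ × ℝ × ℝ,
      pd1 (pd1 (fun y => (H y).2.1)) x + ((ω : ℂ) ^ 2 * (ε : ℂ) * (μ : ℂ)) * (H x).2.1
        = pd2 (pd1 (fun y => (H y).1)) x
          - Complex.I * (ω : ℂ) * (ε : ℂ) * pd3 (fun y => (E y).1) x) ∧
    (∀ x : ℝ × ℝ × ℝ,
      pd1 (pd1 (fun y => (E y).2.2)) x + ((ω : ℂ) ^ 2 * (ε : ℂ) * (μ : ℂ)) * (E x).2.2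
        = pd3 (pd1 (fun y => (E y).1)) x
          - Complex.I * (ω : ℂ) * (μ : ℂ) * pd2 (fun y => (H y).1) x) ∧
    (∀ x : ℝ × ℝ × ℝ,
      pd1 (pd1 (fun y => (H y).2.2)) x + ((ω : ℂ) ^ 2 * (ε : ℂ) * (μ : ℂ)) * (H x).2.2
        = pd3 (pd1 (fun y => (H y).1)) x
          + Complex.I * (ω : ℂ) * (ε : ℂ) * pd2 (fun y => (E y).1) x) ∧
    -- (b) but Maxwell's equation `curl E = iωμ H` fails at the origin
    (curl3 E ((0, 0, 0) : ℝ × ℝ × ℝ)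
        = ((0 : ℂ), (0 : ℂ), ((2 * π * (k₁ : ℝ) / l₁ : ℝ) : ℂ)) ∧
      ((2 * π * (k₁ : ℝ) / l₁ : ℝ) : ℂ) ≠ 0 ∧
      curl3 E ((0, 0, 0) : ℝ × ℝ × ℝ)
        ≠ (Complex.I * (ω : ℂ) * (μ : ℂ)) • H ((0, 0, 0) : ℝ × ℝ × ℝ)) := by
  set c : ℝ := 2 * π * (k₁ : ℝ) / l₁ with hc
  obtain rfl : E = fun x => ((0 : ℂ), ((Real.sin (c * x.1) : ℝ) : ℂ), (0 : ℂ)) := by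
    rw [hE]; funext x; rw [hc, div_mul_eq_mul_div]
  subst hH
  have hc_pos : 0 < c := by
    have : (0 : ℝ) < k₁ := by exact_mod_cast hk₁
    positivity
  have hfreq : (ω : ℂ) ^ 2 * (ε : ℂ) * (μ : ℂ) = ((c ^ 2 : ℝ) : ℂ) := by
    have : ω ^ 2 * ε * μ = c ^ 2 := by rw [hω2, hc]; field_simp; ring
    exact_mod_cast this
  have hE₂ : ∀ x : ℝ × ℝ × ℝ,
      pd1 (pd1 fun y : ℝ × ℝ × ℝ => ((Real.sin (c * y.1) : ℝ) : ℂ)) x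
        + ((ω : ℂ) ^ 2 * (ε : ℂ) * (μ : ℂ)) * ((Real.sin (c * x.1) : ℝ) : ℂ) = 0 := by
    intro x
    rw [pd1_pd1_ofReal_sin_mul_fst, hfreq]
    push_cast
    ring
  have hcurl : curl3 (fun x => ((0 : ℂ), ((Real.sin (c * x.1) : ℝ) : ℂ), (0 : ℂ))) (0, 0, 0)
      = ((0 : ℂ), (0 : ℂ), ((c : ℝ) : ℂ)) := by
    simp only [curl3, pd1_ofReal_sin_mul_fst]
    simp [pd1, pd2, pd3]
  have hc_ne : ((c : ℝ) : ℂ) ≠ 0 := Complex.ofReal_ne_zero.mpr hc_pos.ne'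
  have hmaxwell_fails : curl3 (fun x => ((0 : ℂ), ((Real.sin (c * x.1) : ℝ) : ℂ), (0 : ℂ)))
      (0, 0, 0) ≠ (Complex.I * (ω : ℂ) * (μ : ℂ)) • (0 : ℂ × ℂ × ℂ) := by
    rw [hcurl, smul_zero]
    simpa using hc_ne
  refine ⟨hE₂, by simp, ?_, ?_, fun x => (hE₂ x).trans ?_, ?_, ?_, ?_, hcurl, hc_ne,
    hmaxwell_fails⟩
  all_goals simp [lap, pd1, pd2, pd3]

/-- for ω² ∈ σ(l₁), a solution of the homogeneous Helmholtz-type system need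
not solve the homogeneous Maxwell system. -/
theorem stmt19 (l₁ ε μ ω : ℝ)
    (hl₁ : 0 < l₁) (hε : 0 < ε) (hμ : 0 < μ) (hω : 0 < ω)
    (k₁ : ℕ) (hk₁ : 1 ≤ k₁)
    (hω2 : ω ^ 2 = 4 * π ^ 2 * (k₁ : ℝ) ^ 2 / (ε * μ * l₁ ^ 2))
    (E H : ℝ × ℝ × ℝ → ℂ × ℂ × ℂ)
    (hE : E = fun x => ((0 : ℂ), ((Real.sin (2 * π * (k₁ : ℝ) * x.1 / l₁) : ℝ) : ℂ), (0 : ℂ)))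
    (hH : H = fun _ => (0 : ℂ × ℂ × ℂ)) :
    -- (a) the six homogeneous Helmholtz-type equations
    (∀ x : ℝ × ℝ × ℝ,
      pd1 (pd1 (fun y => (E y).2.1)) x
        + ((ω : ℂ) ^ 2 * (ε : ℂ) * (μ : ℂ)) * (E x).2.1 = 0) ∧
    (∀ x : ℝ × ℝ × ℝ, (E x).1 = 0 ∧ (E x).2.2 = 0 ∧ H x = 0) ∧
    (∀ x : ℝ × ℝ × ℝ,
      lap (fun y => (E y).1) x + ((ω : ℂ) ^ 2 * (ε : ℂ) * (μ : ℂ)) * (E x).1 = 0) ∧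
    (∀ x : ℝ × ℝ × ℝ,
      lap (fun y => (H y).1) x + ((ω : ℂ) ^ 2 * (ε : ℂ) * (μ : ℂ)) * (H x).1 = 0) ∧
    (∀ x : ℝ × ℝ × ℝ,
      pd1 (pd1 (fun y => (E y).2.1)) x + ((ω : ℂ) ^ 2 * (ε : ℂ) * (μ : ℂ)) * (E x).2.1
        = pd2 (pd1 (fun y => (E y).1)) x
          + Complex.I * (ω : ℂ) * (μ : ℂ) * pd3 (fun y => (H y).1) x) ∧
    (∀ x : ℝ × ℝ × ℝ,
      pd1 (pd1 (fun y => (H y).2.1)) x + ((ω : ℂ) ^ 2 * (ε : ℂ) * (μ : ℂ)) * (H x).2.1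
        = pd2 (pd1 (fun y => (H y).1)) x
          - Complex.I * (ω : ℂ) * (ε : ℂ) * pd3 (fun y => (E y).1) x) ∧
    (∀ x : ℝ × ℝ × ℝ,
      pd1 (pd1 (fun y => (E y).2.2)) x + ((ω : ℂ) ^ 2 * (ε : ℂ) * (μ : ℂ)) * (E x).2.2
        = pd3 (pd1 (fun y => (E y).1)) x
          - Complex.I * (ω : ℂ) * (μ : ℂ) * pd2 (fun y => (H y).1) x) ∧
    (∀ x : ℝ × ℝ × ℝ,
      pd1 (pd1 (fun y => (H y).2.2)) x + ((ω : ℂ) ^ 2 * (ε : ℂ) * (μ : ℂ)) * (H x).2.2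
        = pd3 (pd1 (fun y => (H y).1)) x
          + Complex.I * (ω : ℂ) * (ε : ℂ) * pd2 (fun y => (E y).1) x) ∧
    -- (b) but Maxwell's equation `curl E = iωμ H` fails at the origin
    (curl3 E ((0, 0, 0) : ℝ × ℝ × ℝ)
        = ((0 : ℂ), (0 : ℂ), ((2 * π * (k₁ : ℝ) / l₁ : ℝ) : ℂ)) ∧
      ((2 * π * (k₁ : ℝ) / l₁ : ℝ) : ℂ) ≠ 0 ∧
      curl3 E ((0, 0, 0) : ℝ × ℝ × ℝ)
        ≠ (Complex.I * (ω : ℂ) * (μ : ℂ)) • H ((0, 0, 0) : ℝ × ℝ × ℝ)) :=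
  stmt19_general l₁ ε μ ω hl₁ hε hμ k₁ hk₁ hω2 E H hE hH
end
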